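/- Let M = ⟨W, ⊏, r, ⊩⟩ and M0 = ⟨W0, ⊏0, r0, ⊩0⟩ be finite transitive irreflexive rooted Kripke models with r ⊩ □A ∧ ¬A and r0 ⊩ ⋀Rf(□A) ∧ □A. Construct the model M* whose worlds are W ∪ W0 ∪ {r_i : i ≥ 1} ∪ {r*}, where ⊏* is the transitive closure of ⊏ ∪ ⊏0 ∪ {(r_i, r_j) : i > j} ∪ {(r*, r_i) : i ∈ ω} ∪ {(r*, r)} (with r_0 := the root of M0), valuations inherited from M and M0 and each r_i (i ≥ 1) and r* valuating propositional variables as r_0 does. Then for every i ∈ ω and every subformula B of □A: r_i ⊩* B if and only if r_0 ⊩* B. -/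
import Mathlib


/-- Modal propositional formulas (variables are indexed by `ℕ`). -/
inductive MF : Type
  | var : ℕ → MF
  | fal : MF
  | imp : MF → MF → MF
  | box : MF → MF
deriving DecidableEq

namespace MF

def neg (A : MF) : MF := imp A fal
def top : MF := neg fal
def conj (A B : MF) : MF := neg (imp A (neg B))
def disj (A B : MF) : MF := imp (neg A) B
def biimp (A B : MF) : MF := conj (imp A B) (imp B A)
def dia (A : MF) : MF := neg (box (neg A))
def boxn : ℕ → MF → MF
  | 0, A => A
  | n+1, A => box (boxn n A)
def dian (n : ℕ) (A : MF) : MF := neg (boxn n (neg A))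

/-- Uniform substitution. -/
def subst (s : ℕ → MF) : MF → MF
  | var n => s n
  | fal => fal
  | imp A B => imp (subst s A) (subst s B)
  | box A => box (subst s A)

/-- The set of subformulas. -/
def subF : MF → Finset MF
  | var n => {var n}
  | fal => {fal}
  | imp A B => insert (imp A B) (subF A ∪ subF B)
  | box A => insert (box A) (subF A)

def isBox : MF → Bool
  | box _ => true
  | _ => false

def unbox : MF → MF
  | box A => A
  | A => A

/-- `cx A` is the number of subformulas of `A` of the form `□C`. -/
def cx (A : MF) : ℕ := ((subF A).filter (fun B => isBox B = true)).card

/-- `Rf(A) = {□B → B : □B ∈ Sub(A)}`. -/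
def RfSet (A : MF) : Finset MF :=
  ((subF A).filter (fun B => isBox B = true)).image (fun B => imp B (unbox B))

/-- Conjunction of a finite set of formulas. -/
noncomputable def conjFin (s : Finset MF) : MF := s.toList.foldr conj top

/-- `A` is an instance of a propositional tautology. -/
def TautInst (A : MF) : Prop :=
  ∀ v : MF → Bool, (∀ B C, v (imp B C) = (!(v B) || v C)) → v fal = false → v A = true

end MF

/-- Provability in the Gödel–Löb logic GL. -/
inductive GLPrv : MF → Prop
  | taut {A} : MF.TautInst A → GLPrv A
  | k (A B : MF) : GLPrv (MF.imp (MF.box (MF.imp A B)) (MF.imp (MF.box A) (MF.box B)))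
  | lob (A : MF) : GLPrv (MF.imp (MF.box (MF.imp (MF.box A) A)) (MF.box A))
  | mp {A B} : GLPrv (MF.imp A B) → GLPrv A → GLPrv B
  | nec {A} : GLPrv A → GLPrv (MF.box A)

/-- Provability in GL + Γ: axioms are GL-theorems and substitution instances of
formulas in Γ; rules are modus ponens (and substitution, built into the axiom rule). -/
inductive ExtPrv (Ax : Set MF) : MF → Prop
  | gl {A} : GLPrv A → ExtPrv Ax A
  | ax {A} (s : ℕ → MF) : A ∈ Ax → ExtPrv Ax (A.subst s)
  | mp {A B} : ExtPrv Ax (MF.imp A B) → ExtPrv Ax A → ExtPrv Ax B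

/-- GL_ω = GL + {◇ⁿ⊤ : n ∈ ω}. -/
def GLomegaPrv : MF → Prop := ExtPrv (Set.range fun n => MF.dian n MF.top)

/-- GLS = GL + {□p → p}. -/
def GLSPrv : MF → Prop := ExtPrv {MF.imp (MF.box (MF.var 0)) (MF.var 0)}

/-- F_s = □^{s+1}⊥ → □^s⊥. -/
def Fmla (s : ℕ) : MF := MF.imp (MF.boxn (s+1) MF.fal) (MF.boxn s MF.fal)

/-- GL + {¬F_s}. -/
def GLFPrv (s : ℕ) : MF → Prop := ExtPrv {MF.neg (Fmla s)}

/-- A Kripke model for modal logic. -/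
structure KModel where
  W : Type
  R : W → W → Prop
  val : W → ℕ → Prop

/-- The forcing relation. -/
def KModel.force (M : KModel) : M.W → MF → Prop
  | w, MF.var n => M.val w n
  | _, MF.fal => False
  | w, MF.imp A B => M.force w A → M.force w B
  | w, MF.box A => ∀ v, M.R w v → M.force v A

section Merged

variable (M M0 : KModel) (r : M.W) (r0 : M0.W)

/-- The worlds of the merged model `M*`: the worlds of `M` and of `M₀`,
new worlds `r_{i+1}` (`i : ℕ`), and a new root `r*`. -/
def MergedW : Type := (M.W ⊕ M0.W) ⊕ (ℕ ⊕ Unit)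

/-- The base accessibility relation of `M*` (before transitive closure):
`⊏ ∪ ⊏₀ ∪ {(r_i, r_j) : i > j} ∪ {(r*, r_i) : i ∈ ω} ∪ {(r*, r)}`,
where `r_0` is the root of `M₀`. -/
def mergedBase : MergedW M M0 → MergedW M M0 → Prop
  | Sum.inl (Sum.inl a), Sum.inl (Sum.inl b) => M.R a b
  | Sum.inl (Sum.inr a), Sum.inl (Sum.inr b) => M0.R a b
  | Sum.inr (Sum.inl i), Sum.inr (Sum.inl j) => j < i
  | Sum.inr (Sum.inl _), Sum.inl (Sum.inr b) => b = r0
  | Sum.inr (Sum.inr _), Sum.inr (Sum.inl _) => True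
  | Sum.inr (Sum.inr _), Sum.inl (Sum.inr b) => b = r0
  | Sum.inr (Sum.inr _), Sum.inl (Sum.inl b) => b = r
  | _, _ => False

/-- The valuation of `M*`: inherited from `M` and `M₀`, and each `r_i`
(`i ≥ 1`) and `r*` valuate the variables as `r_0` does. -/
def mergedVal : MergedW M M0 → ℕ → Prop
  | Sum.inl (Sum.inl a), n => M.val a n
  | Sum.inl (Sum.inr a), n => M0.val a n
  | Sum.inr _, n => M0.val r0 n

/-- The merged model `M*`, with accessibility the transitive closure of the
base relation. -/
def Merged : KModel :=
  ⟨MergedW M M0, Relation.TransGen (mergedBase M M0 r r0), mergedVal M M0 r0⟩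

/-- The world `r_i` of `M*` (with `r_0` the root of `M₀`). -/
def rIdx : ℕ → MergedW M M0
  | 0 => Sum.inl (Sum.inr r0)
  | i+1 => Sum.inr (Sum.inl i)

end Merged

lemma subF_self (A : MF) : A ∈ A.subF := by
  cases A <;> simp [MF.subF]

lemma subF_closed : ∀ A B : MF, B ∈ A.subF → B.subF ⊆ A.subF := by
  intro A
  induction A with
  | var n => intro B h; simp [MF.subF] at h; subst h; exact subset_rfl
  | fal => intro B h; simp [MF.subF] at h; subst h; exact subset_rfl
  | imp A1 A2 ih1 ih2 =>
    intro B h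
    simp only [MF.subF, Finset.mem_insert, Finset.mem_union] at h
    rcases h with h | h | h
    · subst h; exact subset_rfl
    · exact (ih1 B h).trans (fun x hx => by
        simp only [MF.subF, Finset.mem_insert, Finset.mem_union]; tauto)
    · exact (ih2 B h).trans (fun x hx => by
        simp only [MF.subF, Finset.mem_insert, Finset.mem_union]; tauto)
  | box A1 ih =>
    intro B h
    simp only [MF.subF, Finset.mem_insert] at h
    rcases h with h | h
    · subst h; exact subset_rfl
    · exact (ih B h).trans (fun x hx => by
        simp only [MF.subF, Finset.mem_insert]; tauto)

lemma force_foldr {M : KModel} {w : M.W} :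
    ∀ (l : List MF), M.force w (l.foldr MF.conj MF.top) → ∀ B ∈ l, M.force w B := by
  intro l
  induction l with
  | nil => intro _ B hB; simp at hB
  | cons C l ih =>
    intro h B hB
    have hC : M.force w C ∧ M.force w (l.foldr MF.conj MF.top) := by
      simp only [List.foldr, MF.conj, MF.neg, KModel.force] at h
      by_contra hc
      exact h fun a b => hc ⟨a, b⟩
    rcases List.mem_cons.mp hB with rfl | hB
    · exact hC.1
    · exact ih hC.2 B hB

lemma force_conjFin {M : KModel} {w : M.W} {s : Finset MF}
    (h : M.force w (MF.conjFin s)) : ∀ B ∈ s, M.force w B := by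
  intro B hB
  exact force_foldr s.toList h B (Finset.mem_toList.mpr hB)

lemma merged_R_M0 {M M0 : KModel} {r : M.W} {r0 : M0.W} (hM0tr : Transitive M0.R)
    {a : M0.W} {w : MergedW M M0}
    (h : Relation.TransGen (mergedBase M M0 r r0) (Sum.inl (Sum.inr a)) w) :
    ∃ b, w = Sum.inl (Sum.inr b) ∧ M0.R a b := by
  induction h with
  | single hb =>
    rename_i c
    rcases c with (x | x) | (x | x)
    · exact hb.elim
    · exact ⟨x, rfl, hb⟩
    · exact hb.elim
    · exact hb.elim
  | tail h hb ih =>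
    obtain ⟨b, rfl, hab⟩ := ih
    rename_i c
    rcases c with (x | x) | (x | x)
    · exact hb.elim
    · exact ⟨x, rfl, hM0tr hab hb⟩
    · exact hb.elim
    · exact hb.elim

lemma force_M0_transfer (M M0 : KModel) (r : M.W) (r0 : M0.W) (hM0tr : Transitive M0.R) :
    ∀ (B : MF) (a : M0.W),
      (Merged M M0 r r0).force (Sum.inl (Sum.inr a)) B ↔ M0.force a B := by
  intro B
  induction B with
  | var n => intro a; exact Iff.rfl
  | fal => intro a; exact Iff.rfl
  | imp B C ihB ihC =>
    intro a
    simp only [KModel.force]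
    rw [ihB a, ihC a]
  | box B ih =>
    intro a
    constructor
    · intro h b hab
      exact (ih b).mp (h _ (Relation.TransGen.single hab))
    · intro h w hw
      obtain ⟨b, rfl, hab⟩ := merged_R_M0 hM0tr hw
      exact (ih b).mpr (h b hab)

lemma merged_R_chain {M M0 : KModel} {r : M.W} {r0 : M0.W} (hM0tr : Transitive M0.R)
    {i : ℕ} {w : MergedW M M0}
    (h : Relation.TransGen (mergedBase M M0 r r0) (Sum.inr (Sum.inl i)) w) :
    (∃ b, w = Sum.inl (Sum.inr b) ∧ (b = r0 ∨ M0.R r0 b)) ∨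
      (∃ j, j < i ∧ w = Sum.inr (Sum.inl j)) := by
  induction h with
  | single hb =>
    rename_i c
    rcases c with (x | x) | (x | x)
    · exact hb.elim
    · exact Or.inl ⟨x, rfl, Or.inl hb⟩
    · exact Or.inr ⟨x, hb, rfl⟩
    · exact hb.elim
  | tail h hb ih =>
    rename_i c
    rcases ih with ⟨b, rfl, hb0⟩ | ⟨j, hj, rfl⟩
    · rcases c with (x | x) | (x | x)
      · exact hb.elim
      · refine Or.inl ⟨x, rfl, Or.inr ?_⟩
        rcases hb0 with rfl | hb0
        · exact hb
        · exact hM0tr hb0 hb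
      · exact hb.elim
      · exact hb.elim
    · rcases c with (x | x) | (x | x)
      · exact hb.elim
      · exact Or.inl ⟨x, rfl, Or.inl hb⟩
      · exact Or.inr ⟨x, lt_trans hb hj, rfl⟩
      · exact hb.elim

/-- in the merged model `M*`, for every `i ∈ ω` and every
subformula `B` of `□A`, `r_i ⊩* B` iff `r_0 ⊩* B`. -/
theorem merged_chain_agrees (A : MF) (M M0 : KModel) (r : M.W) (r0 : M0.W)
    (hMtr : Transitive M.R) (hMir : Irreflexive M.R) (hMfin : Finite M.W)
    (hMroot : ∀ x, x ≠ r → M.R r x)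
    (hM0tr : Transitive M0.R) (hM0ir : Irreflexive M0.R) (hM0fin : Finite M0.W)
    (hM0root : ∀ x, x ≠ r0 → M0.R r0 x)
    (hr1 : M.force r (MF.box A)) (hr2 : ¬ M.force r A)
    (hr01 : M0.force r0 (MF.conjFin (MF.RfSet (MF.box A))))
    (hr02 : M0.force r0 (MF.box A)) :
    ∀ i : ℕ, ∀ B ∈ MF.subF (MF.box A),
      ((Merged M M0 r r0).force (rIdx M M0 r0 i) B ↔
       (Merged M M0 r r0).force (rIdx M M0 r0 0) B) := by
  intro i
  induction i using Nat.strong_induction_on with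
  | _ i IH =>
    match i with
    | 0 => intro B _; exact Iff.rfl
    | i + 1 =>
      intro B hB
      induction B with
      | var n => exact Iff.rfl
      | fal => exact Iff.rfl
      | imp B C ihB ihC =>
        have hBm : B ∈ (MF.box A).subF :=
          subF_closed _ _ hB (by
            simp only [MF.subF, Finset.mem_insert, Finset.mem_union]
            exact Or.inr (Or.inl (subF_self B)))
        have hCm : C ∈ (MF.box A).subF :=
          subF_closed _ _ hB (by
            simp only [MF.subF, Finset.mem_insert, Finset.mem_union]
            exact Or.inr (Or.inr (subF_self C)))
        simp only [KModel.force]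
        rw [ihB hBm, ihC hCm]
      | box C ihC =>
        have hCm : C ∈ (MF.box A).subF :=
          subF_closed _ _ hB (by
            simp only [MF.subF, Finset.mem_insert]
            exact Or.inr (subF_self C))
        constructor
        · intro h w hw
          exact h _ (Relation.TransGen.head
            (b := Sum.inl (Sum.inr r0)) rfl hw)
        · intro h
          have hRfmem : MF.imp (MF.box C) C ∈ MF.RfSet (MF.box A) := by
            refine Finset.mem_image.mpr ⟨MF.box C, Finset.mem_filter.mpr ⟨hB, rfl⟩, rfl⟩
          have hRf : M0.force r0 (MF.imp (MF.box C) C) :=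
            force_conjFin hr01 _ hRfmem
          have h0C : (Merged M M0 r r0).force (rIdx M M0 r0 0) C :=
            ((force_M0_transfer M M0 r r0 hM0tr (MF.imp (MF.box C) C) r0).mpr hRf) h
          intro w hw
          rcases merged_R_chain hM0tr hw with ⟨b, rfl, hb⟩ | ⟨j, hj, rfl⟩
          · rcases hb with rfl | hb
            · exact h0C
            · exact h _ (Relation.TransGen.single hb)
          · exact (IH (j + 1) (by omega) C hCm).mpr h0C
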